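/- Let n ≥ 2 and α̃ = (m_{l,r}) ∈ Ã_n. Then all the families α̃_+^{l̃,r̃}, α̃_t^{l̃,r̃} (for admissible (l̃, r̃)) and α̃_m lie in Ã_{n+1}. Moreover, writing P_{γ̃}(x) = ∏_{l,r} ((Δ_l f_{y^r})(x, y(x)))^{γ̃_{l,r}} for a family γ̃ of nonnegative integers, for all x in a sufficiently small neighborhood of x₀ one has: f_y(x, y(x))^2 · (d/dx)P_{α̃}(x) − (2n−1) · Δ_1(f_y)(x, y(x)) · P_{α̃}(x) = Σ_{(l̃,r̃): l̃+r̃≥2, m_{l̃,r̃}≥1} m_{l̃,r̃} · P_{α̃_+^{l̃,r̃}}(x) − Σ_{(l̃,r̃): l̃≥1, (l̃,r̃)≠(2,0), m_{l̃,r̃}≥1} l̃ · m_{l̃,r̃} · P_{α̃_t^{l̃,r̃}}(x) − (n − 1 − m_{0,1} + 2 m_{2,0}) · P_{α̃_m}(x). -/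

import Mathlib

open Filter Topology

/-- `pd f p r` is the mixed partial derivative `∂^(p+r) f / ∂x^p ∂y^r` of a function
of two real variables. -/
noncomputable def pd (f : ℝ → ℝ → ℝ) (p r : ℕ) : ℝ → ℝ → ℝ :=
  fun x y => iteratedDeriv p (fun x' => iteratedDeriv r (fun y' => f x' y') y) x

/-- `Delta f l g = Σ_{j=0}^{l} (−1)^j C(l,j) g_{x^{l−j} y^j} f_x^j f_y^{l−j}`. -/
noncomputable def Delta (f : ℝ → ℝ → ℝ) (l : ℕ) (g : ℝ → ℝ → ℝ) : ℝ → ℝ → ℝ :=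
  fun x y => ∑ j ∈ Finset.range (l + 1),
    (-1 : ℝ) ^ j * (l.choose j : ℝ) * pd g (l - j) j x y *
      (pd f 1 0 x y) ^ j * (pd f 0 1 x y) ^ (l - j)

/-- Membership in the set `Ã_n`. -/
def AtildeMem (n : ℕ) (m : (ℕ × ℕ) →₀ ℕ) : Prop :=
  m (0, 0) = 0 ∧ m (1, 0) = 0 ∧
  (m.sum fun _ k => k) + 1 = n ∧
  (m.sum fun p k => p.1 * k) = n ∧
  (m.sum fun p k => p.2 * k) + 2 = n

/-- `α̃_+^{l̃,r̃}`: decrease `m_{l̃,r̃}` by 1, increase `m_{0,1}` and `m_{l̃+1,r̃}` by 1. -/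
noncomputable def plusOp (m : (ℕ × ℕ) →₀ ℕ) (l r : ℕ) : (ℕ × ℕ) →₀ ℕ :=
  m + Finsupp.single (0, 1) 1 + Finsupp.single (l + 1, r) 1 - Finsupp.single (l, r) 1

/-- `α̃_t^{l̃,r̃}`: decrease `m_{l̃,r̃}` by 1, increase `m_{2,0}` and `m_{l̃−1,r̃+1}` by 1. -/
noncomputable def tOp (m : (ℕ × ℕ) →₀ ℕ) (l r : ℕ) : (ℕ × ℕ) →₀ ℕ :=
  m + Finsupp.single (2, 0) 1 + Finsupp.single (l - 1, r + 1) 1 - Finsupp.single (l, r) 1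

/-- `α̃_m`: increase `m_{1,1}` by 1. -/
noncomputable def mOp (m : (ℕ × ℕ) →₀ ℕ) : (ℕ × ℕ) →₀ ℕ :=
  m + Finsupp.single (1, 1) 1

/-- `P_γ(x) = ∏_{l,r} (Δ_l f_{y^r}(x, y(x)))^{γ_{l,r}}`. -/
noncomputable def Pprod (f : ℝ → ℝ → ℝ) (y : ℝ → ℝ) (m : (ℕ × ℕ) →₀ ℕ) (x : ℝ) : ℝ :=
  m.prod fun p k => (Delta f p.1 (pd f 0 p.2) x (y x)) ^ k

theorem iteratedDeriv_iteratedDeriv (h : ℝ → ℝ) (a b : ℕ) :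
    iteratedDeriv a (iteratedDeriv b h) = iteratedDeriv (a + b) h := by
  induction a with
  | zero => simp
  | succ a ih =>
    rw [iteratedDeriv_succ, ih, ← iteratedDeriv_succ, show a + b + 1 = a + 1 + b by omega]

theorem pd_zero_zero (g : ℝ → ℝ → ℝ) : pd g 0 0 = g := by
  ext a b; simp [pd]

theorem pd_succ_left (g : ℝ → ℝ → ℝ) (p r : ℕ) : pd g (p + 1) r = pd (pd g p r) 1 0 := by
  ext a b
  simp only [pd, iteratedDeriv_one, iteratedDeriv_zero, iteratedDeriv_succ]

theorem pd_comp_left (g : ℝ → ℝ → ℝ) (p q r : ℕ) :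
    pd (pd g 0 r) p q = pd g p (q + r) := by
  ext a b
  simp only [pd, iteratedDeriv_zero]
  congr 1
  ext x'
  show iteratedDeriv q (iteratedDeriv r (g x')) b = iteratedDeriv (q + r) (g x') b
  rw [iteratedDeriv_iteratedDeriv]

theorem pd_zero_succ' (g : ℝ → ℝ → ℝ) (r : ℕ) : pd (pd g 0 r) 0 1 = pd g 0 (r + 1) := by
  rw [pd_comp_left, Nat.one_add]

theorem pd_left_eq (g : ℝ → ℝ → ℝ) (p r : ℕ) : pd (pd g 0 r) p 0 = pd g p r := by
  rw [pd_comp_left, Nat.zero_add]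

theorem Delta_zero' (f g : ℝ → ℝ → ℝ) : Delta f 0 g = g := by
  ext a b; simp [Delta, pd_zero_zero]
open Function
open scoped ContDiff

theorem iteratedDeriv_congr_ev {u v : ℝ → ℝ} {b : ℝ} (h : u =ᶠ[nhds b] v) (n : ℕ) :
    iteratedDeriv n u =ᶠ[nhds b] iteratedDeriv n v := by
  induction n with
  | zero => simpa [iteratedDeriv_zero] using h
  | succ n ih => rw [iteratedDeriv_succ, iteratedDeriv_succ]; exact ih.deriv

theorem pd_congr_ev {h₁ h₂ : ℝ → ℝ → ℝ} {a b : ℝ}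
    (h : ∀ᶠ w in nhds (a, b), h₁ w.1 w.2 = h₂ w.1 w.2) (p r : ℕ) :
    pd h₁ p r a b = pd h₂ p r a b := by
  rcases mem_nhds_prod_iff.1 h with ⟨s, hs, t, ht, hst⟩
  have key : (fun x' => iteratedDeriv r (fun y' => h₁ x' y') b)
      =ᶠ[nhds a] (fun x' => iteratedDeriv r (fun y' => h₂ x' y') b) := by
    filter_upwards [hs] with x' hx'
    have : (fun y' => h₁ x' y') =ᶠ[nhds b] fun y' => h₂ x' y' := by
      filter_upwards [ht] with y' hy'
      exact hst (Set.mk_mem_prod hx' hy')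
    exact (iteratedDeriv_congr_ev this r).self_of_nhds
  exact (iteratedDeriv_congr_ev key p).self_of_nhds

theorem hasDerivAt_slice_x {g : ℝ → ℝ → ℝ} {a b : ℝ}
    (h : ContDiffAt ℝ (⊤ : ℕ∞) (uncurry g) (a, b)) :
    HasDerivAt (fun x' => g x' b) (fderiv ℝ (uncurry g) (a, b) (1, 0)) a := by
  have hd : DifferentiableAt ℝ (uncurry g) (a, b) :=
    h.differentiableAt (by simp)
  have hc : HasDerivAt (fun x' => ((x' : ℝ), b)) ((1 : ℝ), (0 : ℝ)) a :=
    (hasDerivAt_id a).prodMk (hasDerivAt_const a b)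
  simpa [Function.comp_def] using hd.hasFDerivAt.comp_hasDerivAt a hc

theorem hasDerivAt_slice_y {g : ℝ → ℝ → ℝ} {a b : ℝ}
    (h : ContDiffAt ℝ (⊤ : ℕ∞) (uncurry g) (a, b)) :
    HasDerivAt (fun y' => g a y') (fderiv ℝ (uncurry g) (a, b) (0, 1)) b := by
  have hd : DifferentiableAt ℝ (uncurry g) (a, b) :=
    h.differentiableAt (by simp)
  have hc : HasDerivAt (fun y' => ((a : ℝ), (y' : ℝ))) ((0 : ℝ), (1 : ℝ)) b :=
    (hasDerivAt_const b a).prodMk (hasDerivAt_id b)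
  simpa [Function.comp_def] using hd.hasFDerivAt.comp_hasDerivAt b hc

theorem pd10_apply (g : ℝ → ℝ → ℝ) (a b : ℝ) :
    pd g 1 0 a b = deriv (fun x' => g x' b) a := by
  simp [pd, iteratedDeriv_one]

theorem pd01_apply (g : ℝ → ℝ → ℝ) (a b : ℝ) :
    pd g 0 1 a b = deriv (fun y' => g a y') b := by
  simp [pd, iteratedDeriv_one]

theorem pd10_eq_fderiv {g : ℝ → ℝ → ℝ} {a b : ℝ}
    (h : ContDiffAt ℝ (⊤ : ℕ∞) (uncurry g) (a, b)) :
    pd g 1 0 a b = fderiv ℝ (uncurry g) (a, b) (1, 0) := by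
  rw [pd10_apply]; exact (hasDerivAt_slice_x h).deriv

theorem pd01_eq_fderiv {g : ℝ → ℝ → ℝ} {a b : ℝ}
    (h : ContDiffAt ℝ (⊤ : ℕ∞) (uncurry g) (a, b)) :
    pd g 0 1 a b = fderiv ℝ (uncurry g) (a, b) (0, 1) := by
  rw [pd01_apply]; exact (hasDerivAt_slice_y h).deriv

theorem contDiffAt_fderiv_apply {g : ℝ → ℝ → ℝ} {z : ℝ × ℝ}
    (h : ∀ᶠ w in nhds z, ContDiffAt ℝ (⊤ : ℕ∞) (uncurry g) w) (v : ℝ × ℝ) :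
    ContDiffAt ℝ (⊤ : ℕ∞) (fun w => fderiv ℝ (uncurry g) w v) z := by
  have h0 : ContDiffAt ℝ (⊤ : ℕ∞) (uncurry g) z := h.self_of_nhds
  rw [show (((⊤ : ℕ∞)) : WithTop ℕ∞) = ∞ from rfl, contDiffAt_infty]
  intro n
  have : ContDiffAt ℝ n (fderiv ℝ (uncurry g)) z := by
    apply h0.fderiv_right
    exact_mod_cast le_top
  exact this.clm_apply contDiffAt_const
/-- `g` is infinitely differentiable (as uncurried function) near `z₀`. -/
def Nice (z₀ : ℝ × ℝ) (g : ℝ → ℝ → ℝ) : Prop :=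
  ∀ᶠ w in nhds z₀, ContDiffAt ℝ (⊤ : ℕ∞) (uncurry g) w

theorem Nice.pd10_eventuallyEq {z₀ : ℝ × ℝ} {g : ℝ → ℝ → ℝ} (hg : Nice z₀ g) :
    ∀ᶠ w in nhds z₀, pd g 1 0 w.1 w.2 = fderiv ℝ (uncurry g) w (1, 0) := by
  filter_upwards [hg] with w hw
  exact pd10_eq_fderiv (by simpa using hw)

theorem Nice.pd01_eventuallyEq {z₀ : ℝ × ℝ} {g : ℝ → ℝ → ℝ} (hg : Nice z₀ g) :
    ∀ᶠ w in nhds z₀, pd g 0 1 w.1 w.2 = fderiv ℝ (uncurry g) w (0, 1) := by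
  filter_upwards [hg] with w hw
  exact pd01_eq_fderiv (by simpa using hw)

theorem Nice.pd10 {z₀ : ℝ × ℝ} {g : ℝ → ℝ → ℝ} (hg : Nice z₀ g) : Nice z₀ (pd g 1 0) := by
  filter_upwards [hg.eventually_nhds, hg.pd10_eventuallyEq.eventually_nhds] with z hz heq
  refine (contDiffAt_fderiv_apply hz (1, 0)).congr_of_eventuallyEq ?_
  filter_upwards [heq] with w hw
  simpa [uncurry] using hw

theorem Nice.pd01 {z₀ : ℝ × ℝ} {g : ℝ → ℝ → ℝ} (hg : Nice z₀ g) : Nice z₀ (pd g 0 1) := by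
  filter_upwards [hg.eventually_nhds, hg.pd01_eventuallyEq.eventually_nhds] with z hz heq
  refine (contDiffAt_fderiv_apply hz (0, 1)).congr_of_eventuallyEq ?_
  filter_upwards [heq] with w hw
  simpa [uncurry] using hw

theorem Nice.pdAll {z₀ : ℝ × ℝ} {g : ℝ → ℝ → ℝ} (hg : Nice z₀ g) (p r : ℕ) :
    Nice z₀ (_root_.pd g p r) := by
  have h0 : ∀ r, Nice z₀ (_root_.pd g 0 r) := by
    intro r
    induction r with
    | zero => rwa [pd_zero_zero]
    | succ r ih => rw [← pd_zero_succ']; exact ih.pd01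
  rw [← pd_left_eq]
  induction p with
  | zero => rw [pd_zero_zero]; exact h0 r
  | succ p ih => rw [pd_succ_left]; exact ih.pd10

/-- Clairaut's theorem, in the form needed here. -/
theorem Nice.clairaut {z₀ : ℝ × ℝ} {g : ℝ → ℝ → ℝ} (hg : Nice z₀ g) :
    ∀ᶠ z in nhds z₀, _root_.pd (_root_.pd g 1 0) 0 1 z.1 z.2 = _root_.pd (_root_.pd g 0 1) 1 0 z.1 z.2 := by
  filter_upwards [hg.eventually_nhds, hg, hg.pd10_eventuallyEq.eventually_nhds,
    hg.pd01_eventuallyEq.eventually_nhds] with z hz hz0 h10 h01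
  have hd2 : ContDiffAt ℝ (1 : ℕ) (fderiv ℝ (uncurry g)) z :=
    hz0.fderiv_right (by norm_cast)
  have hdiff : DifferentiableAt ℝ (fderiv ℝ (uncurry g)) z :=
    hd2.differentiableAt (by norm_cast)
  have key : ∀ v u : ℝ × ℝ,
      fderiv ℝ (fun w => fderiv ℝ (uncurry g) w v) z u
        = fderiv ℝ (fderiv ℝ (uncurry g)) z u v := by
    intro v u
    rw [fderiv_clm_apply hdiff (differentiableAt_const v)]
    simp
  have hsymm : IsSymmSndFDerivAt ℝ (uncurry g) z :=
    hz0.isSymmSndFDerivAt (by simp only [minSmoothness_of_isRCLikeNormedField]; exact WithTop.coe_le_coe.2 le_top)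
  have e1 : _root_.pd (_root_.pd g 1 0) 0 1 z.1 z.2
      = _root_.pd (fun a b => fderiv ℝ (uncurry g) (a, b) (1, 0)) 0 1 z.1 z.2 := by
    apply pd_congr_ev
    simpa using h10
  have e2 : _root_.pd (_root_.pd g 0 1) 1 0 z.1 z.2
      = _root_.pd (fun a b => fderiv ℝ (uncurry g) (a, b) (0, 1)) 1 0 z.1 z.2 := by
    apply pd_congr_ev
    simpa using h01
  rw [e1, e2]
  rw [pd01_eq_fderiv (g := fun a b => fderiv ℝ (uncurry g) (a, b) (1, 0))
    (by exact contDiffAt_fderiv_apply hz (1, 0))]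
  rw [pd10_eq_fderiv (g := fun a b => fderiv ℝ (uncurry g) (a, b) (0, 1))
    (by exact contDiffAt_fderiv_apply hz (0, 1))]
  have k1 := key (1, 0) (0, 1)
  have k2 := key (0, 1) (1, 0)
  exact k1.trans ((hsymm _ _).trans k2.symm)
theorem ev_pd_congr {z₀ : ℝ × ℝ} {h₁ h₂ : ℝ → ℝ → ℝ}
    (h : ∀ᶠ w in nhds z₀, h₁ w.1 w.2 = h₂ w.1 w.2) (p r : ℕ) :
    ∀ᶠ z in nhds z₀, pd h₁ p r z.1 z.2 = pd h₂ p r z.1 z.2 := by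
  filter_upwards [h.eventually_nhds] with z hz
  exact pd_congr_ev (by simpa using hz) p r

theorem Nice.comm_core {z₀ : ℝ × ℝ} {G : ℝ → ℝ → ℝ} (hG : Nice z₀ G) (p : ℕ) :
    ∀ᶠ z in nhds z₀, pd (pd G p 0) 0 1 z.1 z.2 = pd (pd G 0 1) p 0 z.1 z.2 := by
  induction p with
  | zero =>
    filter_upwards with z
    rw [pd_zero_zero, pd_zero_zero]
  | succ p ih =>
    have h1 := (hG.pdAll p 0).pd10.clairaut
    have h1' := (hG.pdAll p 0).clairaut
    have h2 := ev_pd_congr ih 1 0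
    filter_upwards [h1', h2] with z hz1 hz2
    rw [pd_succ_left G p 0, hz1, hz2, ← pd_succ_left]

theorem Nice.pd_right {z₀ : ℝ × ℝ} {g : ℝ → ℝ → ℝ} (hg : Nice z₀ g) (p r : ℕ) :
    ∀ᶠ z in nhds z₀, pd (pd g p r) 0 1 z.1 z.2 = pd g p (r + 1) z.1 z.2 := by
  have h := (hg.pdAll 0 r).comm_core p
  rw [pd_left_eq, pd_zero_succ', pd_left_eq] at h
  exact h
theorem sum_shift_of_zero {n : ℕ} (F : ℕ → ℝ) (h0 : F 0 = 0) :
    ∑ j ∈ Finset.range n, F (j + 1) = ∑ i ∈ Finset.range (n + 1), F i := by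
  rw [Finset.sum_range_succ' F n, h0, add_zero]

theorem star_algebra (l : ℕ) (G : ℕ → ℕ → ℝ) (fx fy f20 f11 f02 yp : ℝ)
    (hyp : fy * yp = -fx) :
    fy^2 * (∑ j ∈ Finset.range (l+1),
      (-1:ℝ)^j * (l.choose j : ℝ) *
        (((G (l-j+1) j + G (l-j) (j+1) * yp) * fx^j
            + G (l-j) j * ((j:ℝ) * fx^(j-1) * (f20 + f11 * yp))) * fy^(l-j)
          + G (l-j) j * fx^j * (((l-j : ℕ):ℝ) * fy^(l-j-1) * (f11 + f02 * yp))))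
    = fy * (∑ j ∈ Finset.range (l+2),
          (-1:ℝ)^j * ((l+1).choose j : ℝ) * G (l+1-j) j * fx^j * fy^(l+1-j))
      - (l:ℝ) * (f20*fy^2 - 2*f11*fx*fy + f02*fx^2) *
          (∑ j ∈ Finset.range l,
            (-1:ℝ)^j * ((l-1).choose j : ℝ) * G (l-1-j) (j+1) * fx^j * fy^(l-1-j))
      + (l:ℝ) * (fy*f11 - fx*f02) *
          (∑ j ∈ Finset.range (l+1),
            (-1:ℝ)^j * (l.choose j : ℝ) * G (l-j) j * fx^j * fy^(l-j)) := by
  have hfx0 : fy = 0 → fx = 0 := by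
    intro hfy; have := hyp; rw [hfy] at this; simpa using this.symm
  -- the four pieces
  set Q1 : ℕ → ℝ := fun j => (-1:ℝ)^j * (l.choose j : ℝ) * G (l-j+1) j * fx^j * fy^(l-j+2) with hQ1
  set Q2 : ℕ → ℝ := fun j => -((-1:ℝ)^j * (l.choose j : ℝ) * G (l-j) (j+1) * fx^(j+1) * fy^(l-j+1)) with hQ2
  set Q3 : ℕ → ℝ := fun j => (-1:ℝ)^j * (l.choose j : ℝ) * (j:ℝ) * G (l-j) j * fx^(j-1) * (fy*f20 - fx*f11) * fy^(l-j+1) with hQ3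
  set Q4 : ℕ → ℝ := fun j => (-1:ℝ)^j * (l.choose j : ℝ) * ((l-j : ℕ):ℝ) * G (l-j) j * fx^j * (fy*f11 - fx*f02) * fy^(l-j) with hQ4
  have key : ∀ j ∈ Finset.range (l+1),
      fy^2 * ((-1:ℝ)^j * (l.choose j : ℝ) *
        (((G (l-j+1) j + G (l-j) (j+1) * yp) * fx^j
            + G (l-j) j * ((j:ℝ) * fx^(j-1) * (f20 + f11 * yp))) * fy^(l-j)
          + G (l-j) j * fx^j * (((l-j : ℕ):ℝ) * fy^(l-j-1) * (f11 + f02 * yp))))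
      = Q1 j + Q2 j + Q3 j + Q4 j := by
    intro j hj
    have hjl : j ≤ l := by simpa [Nat.lt_succ_iff] using hj
    simp only [hQ1, hQ2, hQ3, hQ4]
    rcases eq_or_lt_of_le hjl with h | h
    · subst h
      simp only [Nat.sub_self, Nat.zero_sub, Nat.cast_zero, pow_zero]
      rcases eq_or_ne fy 0 with hfy | hfy
      · simp [hfy, hfx0 hfy]
      · have hyp' : yp = -fx/fy := by field_simp; linarith [hyp]
        rw [hyp']; field_simp; ring
    · have h1 : l - j = (l - 1 - j) + 1 := by omega
      have h2 : l - j - 1 = l - 1 - j := by omega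
      rw [h2, h1]
      rcases eq_or_ne fy 0 with hfy | hfy
      · simp only [hfy, hfx0 hfy]; push_cast; ring
      · have hyp' : yp = -fx/fy := by field_simp; linarith [hyp]
        rw [hyp']; field_simp; push_cast; ring
  rw [Finset.mul_sum, Finset.sum_congr rfl key]
  have hsplit : ∑ j ∈ Finset.range (l+1), (Q1 j + Q2 j + Q3 j + Q4 j)
      = (∑ j ∈ Finset.range (l+1), Q1 j) + (∑ j ∈ Finset.range (l+1), Q2 j)
        + (∑ j ∈ Finset.range (l+1), Q3 j) + (∑ j ∈ Finset.range (l+1), Q4 j) := by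
    simp [Finset.sum_add_distrib]
  rw [hsplit]
  -- claim 1
  have c1 : (∑ j ∈ Finset.range (l+1), Q1 j) + (∑ j ∈ Finset.range (l+1), Q2 j)
      = fy * (∑ j ∈ Finset.range (l+2),
          (-1:ℝ)^j * ((l+1).choose j : ℝ) * G (l+1-j) j * fx^j * fy^(l+1-j)) := by
    set F' : ℕ → ℝ := fun i => (-1:ℝ)^i * (((l+1).choose i : ℝ) - (l.choose i : ℝ)) * G (l+1-i) i * fx^i * fy^(l+2-i) with hF'
    set X' : ℕ → ℝ := fun i => (-1:ℝ)^i * (l.choose i : ℝ) * G (l+1-i) i * fx^i * fy^(l+2-i) with hX'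
    have e2 : ∀ j ∈ Finset.range (l+1), Q2 j = F' (j+1) := by
      intro j hj
      have hjl : j ≤ l := by simpa [Nat.lt_succ_iff] using hj
      simp only [hQ2, hF']
      rw [show l+1-(j+1) = l-j from by omega, show l+2-(j+1) = l-j+1 from by omega]
      have hch : ((l+1).choose (j+1) : ℝ) = (l.choose j : ℝ) + (l.choose (j+1) : ℝ) := by
        exact_mod_cast congrArg (Nat.cast (R := ℝ)) (Nat.choose_succ_succ l j)
      rw [hch, pow_succ]
      ring
    have e2' : ∑ j ∈ Finset.range (l+1), Q2 j = ∑ i ∈ Finset.range (l+2), F' i := by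
      rw [Finset.sum_congr rfl e2]
      exact sum_shift_of_zero F' (by simp [hF'])
    have e1 : ∀ j ∈ Finset.range (l+1), Q1 j = X' j := by
      intro j hj
      have hjl : j ≤ l := by simpa [Nat.lt_succ_iff] using hj
      simp only [hQ1, hX']
      rw [show l+1-j = l-j+1 from by omega, show l+2-j = l-j+2 from by omega]
    have e1' : ∑ j ∈ Finset.range (l+1), Q1 j = ∑ i ∈ Finset.range (l+2), X' i := by
      rw [Finset.sum_congr rfl e1, Finset.sum_range_succ X' (l+1)]
      have hz : X' (l+1) = 0 := by
        simp [hX', Nat.choose_eq_zero_of_lt (Nat.lt_succ_self l)]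
      rw [hz, add_zero]
    rw [e1', e2', Finset.mul_sum, ← Finset.sum_add_distrib]
    refine Finset.sum_congr rfl fun i hi => ?_
    have hil : i ≤ l + 1 := by simpa [Nat.lt_succ_iff] using hi
    simp only [hX', hF']
    rw [show l+2-i = (l+1-i)+1 from by omega]
    ring
  -- coefficient identity for claims 2, 3
  have hcoef : ∀ j, j < l → (l:ℝ) * ((l-1).choose j : ℝ) = (l.choose (j+1) : ℝ) * ((j+1 : ℕ):ℝ) := by
    intro j hj
    have h : l * (l-1).choose j = l.choose (j+1) * (j+1) := by
      have hl : (l-1)+1 = l := by omega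
      calc l * (l-1).choose j = ((l-1)+1) * (l-1).choose j := by rw [hl]
        _ = ((l-1)+1).choose (j+1) * (j+1) := Nat.add_one_mul_choose_eq (l-1) j
        _ = l.choose (j+1) * (j+1) := by rw [hl]
    exact_mod_cast congrArg (Nat.cast (R := ℝ)) h
  -- claim 2
  have c2 : (∑ j ∈ Finset.range (l+1), Q3 j)
      = -((l:ℝ) * fy * (fy*f20 - fx*f11)) * (∑ j ∈ Finset.range l,
            (-1:ℝ)^j * ((l-1).choose j : ℝ) * G (l-1-j) (j+1) * fx^j * fy^(l-1-j)) := by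
    have e3 : ∑ j ∈ Finset.range (l+1), Q3 j = ∑ j ∈ Finset.range l, Q3 (j+1) := by
      rw [Finset.sum_range_succ' Q3 l]
      simp [hQ3]
    rw [e3, Finset.mul_sum]
    refine Finset.sum_congr rfl fun j hj => ?_
    have hjl : j < l := Finset.mem_range.1 hj
    simp only [hQ3]
    rw [show l-(j+1) = l-1-j from by omega, show j+1-1 = j from by omega,
      show l-1-j+1 = (l-1-j)+1 from rfl, pow_succ]
    have := hcoef j hjl
    linear_combination ((-1:ℝ)^j * G (l-1-j) (j+1) * fx^j * (fy*f20 - fx*f11) * fy^((l-1-j)+1)) * this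
  -- claim 3
  have c3 : (∑ j ∈ Finset.range (l+1), Q4 j)
      = (l:ℝ) * fx * (fy*f11 - fx*f02) * (∑ j ∈ Finset.range l,
            (-1:ℝ)^j * ((l-1).choose j : ℝ) * G (l-1-j) (j+1) * fx^j * fy^(l-1-j))
        + (l:ℝ) * (fy*f11 - fx*f02) * (∑ j ∈ Finset.range (l+1),
            (-1:ℝ)^j * (l.choose j : ℝ) * G (l-j) j * fx^j * fy^(l-j)) := by
    set T : ℕ → ℝ := fun j => (j:ℝ) * ((-1:ℝ)^j * (l.choose j : ℝ) * G (l-j) j * fx^j * (fy*f11 - fx*f02) * fy^(l-j)) with hT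
    have split4 : ∀ j ∈ Finset.range (l+1), Q4 j
        = (l:ℝ) * ((fy*f11 - fx*f02) * ((-1:ℝ)^j * (l.choose j : ℝ) * G (l-j) j * fx^j * fy^(l-j))) - T j := by
      intro j hj
      have hjl : j ≤ l := by simpa [Nat.lt_succ_iff] using hj
      simp only [hQ4, hT]
      rw [Nat.cast_sub hjl]
      ring
    have eT : ∑ j ∈ Finset.range (l+1), T j
        = -((l:ℝ) * fx * (fy*f11 - fx*f02)) * (∑ j ∈ Finset.range l,
            (-1:ℝ)^j * ((l-1).choose j : ℝ) * G (l-1-j) (j+1) * fx^j * fy^(l-1-j)) := by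
      have e5 : ∑ j ∈ Finset.range (l+1), T j = ∑ j ∈ Finset.range l, T (j+1) := by
        rw [Finset.sum_range_succ' T l]
        simp [hT]
      rw [e5, Finset.mul_sum]
      refine Finset.sum_congr rfl fun j hj => ?_
      have hjl : j < l := Finset.mem_range.1 hj
      simp only [hT]
      rw [show l-(j+1) = l-1-j from by omega, pow_succ]
      have := hcoef j hjl
      linear_combination ((-1:ℝ)^j * G (l-1-j) (j+1) * fx^(j+1) * (fy*f11 - fx*f02) * fy^(l-1-j)) * this
    calc ∑ j ∈ Finset.range (l+1), Q4 j
        = ∑ j ∈ Finset.range (l+1), ((l:ℝ) * ((fy*f11 - fx*f02) * ((-1:ℝ)^j * (l.choose j : ℝ) * G (l-j) j * fx^j * fy^(l-j))) - T j) :=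
          Finset.sum_congr rfl split4
      _ = (l:ℝ) * (fy*f11 - fx*f02) * (∑ j ∈ Finset.range (l+1),
            (-1:ℝ)^j * (l.choose j : ℝ) * G (l-j) j * fx^j * fy^(l-j))
          - ∑ j ∈ Finset.range (l+1), T j := by
          rw [Finset.sum_sub_distrib, ← Finset.mul_sum, ← Finset.mul_sum, mul_assoc]
      _ = _ := by rw [eT]; ring
  rw [c1, c2, c3]
  ring
theorem ev_curve {x₀ y₀ : ℝ} {y : ℝ → ℝ} (hy0 : y x₀ = y₀) (hyc : ContinuousAt y x₀)
    {P : ℝ × ℝ → Prop} (h : ∀ᶠ z in nhds (x₀, y₀), P z) :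
    ∀ᶠ x in nhds x₀, P (x, y x) := by
  have ht : Filter.Tendsto (fun x => (x, y x)) (nhds x₀) (nhds (x₀, y₀)) := by
    rw [← hy0]
    exact continuousAt_id.prodMk hyc
  exact ht.eventually h

theorem hasDerivAt_comp_curve {g : ℝ → ℝ → ℝ} {y : ℝ → ℝ} {x : ℝ}
    (hg : ContDiffAt ℝ (⊤ : ℕ∞) (uncurry g) (x, y x)) (hy : ContDiffAt ℝ (⊤ : ℕ∞) y x) :
    HasDerivAt (fun x' => g x' (y x'))
      (pd g 1 0 x (y x) + pd g 0 1 x (y x) * deriv y x) x := by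
  have hyd : HasDerivAt y (deriv y x) x :=
    (hy.differentiableAt (by norm_cast)).hasDerivAt
  have hc : HasDerivAt (fun x' => (x', y x')) ((1 : ℝ), deriv y x) x :=
    (hasDerivAt_id x).prodMk hyd
  have hd := (hg.differentiableAt (by norm_cast)).hasFDerivAt
  have h := hd.comp_hasDerivAt x hc
  have hL : fderiv ℝ (uncurry g) (x, y x) (1, deriv y x)
      = pd g 1 0 x (y x) + pd g 0 1 x (y x) * deriv y x := by
    rw [pd10_eq_fderiv hg, pd01_eq_fderiv hg]
    have hv : ((1 : ℝ), deriv y x) = ((1 : ℝ), (0 : ℝ)) + deriv y x • ((0 : ℝ), (1 : ℝ)) := by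
      simp [Prod.ext_iff]
    rw [hv, map_add, map_smul]
    simp [smul_eq_mul]
    ring
  rw [← hL]
  simpa [Function.comp_def] using h

theorem CL {x₀ y₀ : ℝ} {y : ℝ → ℝ} (hy0 : y x₀ = y₀)
    (hy : ∀ᶠ x in nhds x₀, ContDiffAt ℝ (⊤ : ℕ∞) y x)
    {g : ℝ → ℝ → ℝ} (hg : Nice (x₀, y₀) g) (a b : ℕ) :
    ∀ᶠ x in nhds x₀, HasDerivAt (fun x' => pd g a b x' (y x'))
      (pd g (a+1) b x (y x) + pd g a (b+1) x (y x) * deriv y x) x := by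
  have hyc : ContinuousAt y x₀ := hy.self_of_nhds.continuousAt
  have h1 := ev_curve hy0 hyc (hg.pdAll a b)
  have h2 := ev_curve hy0 hyc (hg.pd_right a b)
  filter_upwards [h1, h2, hy] with x hx1 hx2 hx3
  have h := hasDerivAt_comp_curve hx1 hx3
  rw [← pd_succ_left] at h
  rw [← hx2]
  exact h

theorem key_yp {x₀ y₀ : ℝ} {f : ℝ → ℝ → ℝ} {y : ℝ → ℝ}
    (hfN : Nice (x₀, y₀) f) (hy : ∀ᶠ x in nhds x₀, ContDiffAt ℝ (⊤ : ℕ∞) y x)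
    (hy0 : y x₀ = y₀) (himp : ∀ᶠ x in nhds x₀, f x (y x) = 0) :
    ∀ᶠ x in nhds x₀, pd f 0 1 x (y x) * deriv y x = -(pd f 1 0 x (y x)) := by
  have hyc : ContinuousAt y x₀ := hy.self_of_nhds.continuousAt
  filter_upwards [ev_curve hy0 hyc hfN, hy, himp.eventually_nhds] with x hx1 hx3 hx4
  have h := hasDerivAt_comp_curve hx1 hx3
  have h0 : HasDerivAt (fun x' => f x' (y x')) 0 x :=
    (hasDerivAt_const x (0:ℝ)).congr_of_eventuallyEq (by filter_upwards [hx4] with u hu using hu)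
  have := h.unique h0
  linarith [this]
theorem Delta_succ_expand (f g : ℝ → ℝ → ℝ) (l : ℕ) (x y : ℝ) :
    Delta f (l+1) g x y = ∑ j ∈ Finset.range (l+2),
      (-1:ℝ)^j * ((l+1).choose j : ℝ) * pd g (l+1-j) j x y *
        (pd f 1 0 x y)^j * (pd f 0 1 x y)^(l+1-j) := by
  simp only [Delta]

theorem Delta_pred_expand (f g : ℝ → ℝ → ℝ) (l : ℕ) (x y : ℝ) :
    Delta f (l-1) (pd g 0 1) x y = ∑ j ∈ Finset.range (l-1+1),
      (-1:ℝ)^j * ((l-1).choose j : ℝ) * pd g (l-1-j) (j+1) x y *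
        (pd f 1 0 x y)^j * (pd f 0 1 x y)^(l-1-j) := by
  simp only [Delta, pd_comp_left]

theorem Delta_one_expand (f g : ℝ → ℝ → ℝ) (x y : ℝ) :
    Delta f 1 g x y = pd g 1 0 x y * pd f 0 1 x y - pd g 0 1 x y * pd f 1 0 x y := by
  simp [Delta, Finset.sum_range_succ]
  ring

theorem Delta_two_expand (f g : ℝ → ℝ → ℝ) (x y : ℝ) :
    Delta f 2 g x y = pd g 2 0 x y * (pd f 0 1 x y)^2
      - 2 * pd g 1 1 x y * pd f 1 0 x y * pd f 0 1 x y
      + pd g 0 2 x y * (pd f 1 0 x y)^2 := by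
  simp [Delta, Finset.sum_range_succ]
  ring

theorem star_analytic {x₀ y₀ : ℝ} {f : ℝ → ℝ → ℝ} {y : ℝ → ℝ}
    (hfN : Nice (x₀, y₀) f)
    (hy : ∀ᶠ x in nhds x₀, ContDiffAt ℝ (⊤ : ℕ∞) y x)
    (hy0 : y x₀ = y₀) (himp : ∀ᶠ x in nhds x₀, f x (y x) = 0)
    {g : ℝ → ℝ → ℝ} (hg : Nice (x₀, y₀) g) (l : ℕ) :
    ∀ᶠ x in nhds x₀,
      DifferentiableAt ℝ (fun x' => Delta f l g x' (y x')) x ∧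
      pd f 0 1 x (y x) ^ 2 * deriv (fun x' => Delta f l g x' (y x')) x
        = pd f 0 1 x (y x) * Delta f (l+1) g x (y x)
          - (l:ℝ) * Delta f 2 f x (y x) * Delta f (l-1) (pd g 0 1) x (y x)
          + (l:ℝ) * Delta f 1 (pd f 0 1) x (y x) * Delta f l g x (y x) := by
  have hCL : ∀ᶠ x in nhds x₀, ∀ j ∈ Finset.range (l+1),
      HasDerivAt (fun x' => pd g (l-j) j x' (y x'))
        (pd g (l-j+1) j x (y x) + pd g (l-j) (j+1) x (y x) * deriv y x) x :=
    (Filter.eventually_all_finset _).2 (fun j _ => CL hy0 hy hg (l-j) j)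
  filter_upwards [hCL, CL hy0 hy hfN 1 0, CL hy0 hy hfN 0 1, key_yp hfN hy hy0 himp]
    with x hG hFX hFY hyp
  norm_num at hFX hFY
  have hterm : ∀ j ∈ Finset.range (l+1),
      HasDerivAt (fun x' => (-1:ℝ)^j * (l.choose j : ℝ) * pd g (l-j) j x' (y x')
          * (pd f 1 0 x' (y x'))^j * (pd f 0 1 x' (y x'))^(l-j))
        ((-1:ℝ)^j * (l.choose j : ℝ) *
          (((pd g (l-j+1) j x (y x) + pd g (l-j) (j+1) x (y x) * deriv y x) * (pd f 1 0 x (y x))^j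
              + pd g (l-j) j x (y x) * ((j:ℝ) * (pd f 1 0 x (y x))^(j-1)
                  * (pd f 2 0 x (y x) + pd f 1 1 x (y x) * deriv y x))) * (pd f 0 1 x (y x))^(l-j)
            + pd g (l-j) j x (y x) * (pd f 1 0 x (y x))^j *
                (((l-j : ℕ):ℝ) * (pd f 0 1 x (y x))^(l-j-1)
                  * (pd f 1 1 x (y x) + pd f 0 2 x (y x) * deriv y x)))) x := by
    intro j hj
    have h3 := (((hG j hj).const_mul ((-1:ℝ)^j * (l.choose j : ℝ))).fun_mul (hFX.fun_pow j)).fun_mul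
      (hFY.fun_pow (l-j))
    refine h3.congr_deriv ?_
    ring
  have hD : deriv (fun x' => Delta f l g x' (y x')) x
      = ∑ j ∈ Finset.range (l+1),
        ((-1:ℝ)^j * (l.choose j : ℝ) *
          (((pd g (l-j+1) j x (y x) + pd g (l-j) (j+1) x (y x) * deriv y x) * (pd f 1 0 x (y x))^j
              + pd g (l-j) j x (y x) * ((j:ℝ) * (pd f 1 0 x (y x))^(j-1)
                  * (pd f 2 0 x (y x) + pd f 1 1 x (y x) * deriv y x))) * (pd f 0 1 x (y x))^(l-j)
            + pd g (l-j) j x (y x) * (pd f 1 0 x (y x))^j *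
                (((l-j : ℕ):ℝ) * (pd f 0 1 x (y x))^(l-j-1)
                  * (pd f 1 1 x (y x) + pd f 0 2 x (y x) * deriv y x)))) :=
    (HasDerivAt.fun_sum hterm).deriv
  refine ⟨(HasDerivAt.fun_sum hterm).differentiableAt, ?_⟩
  rw [hD]
  have SA := star_algebra l (fun a b => pd g a b x (y x)) (pd f 1 0 x (y x)) (pd f 0 1 x (y x))
    (pd f 2 0 x (y x)) (pd f 1 1 x (y x)) (pd f 0 2 x (y x)) (deriv y x) hyp
  beta_reduce at SA
  rw [SA, Delta_succ_expand, Delta_pred_expand, Delta_two_expand, Delta_one_expand,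
    pd_left_eq, pd_zero_succ']
  simp only [Delta]
  rcases Nat.eq_zero_or_pos l with hl | hl
  · subst hl
    norm_num
  · rw [show l - 1 + 1 = l from by omega]
    simp only [show (1+1:ℕ) = 2 from rfl]
    ring
section Finsupp_helpers

theorem fs_sum_add (m₁ m₂ : (ℕ × ℕ) →₀ ℕ) (w : ℕ × ℕ → ℕ → ℕ) (h0 : ∀ p, w p 0 = 0)
    (hadd : ∀ p a b, w p (a + b) = w p a + w p b) :
    (m₁ + m₂).sum w = m₁.sum w + m₂.sum w :=
  Finsupp.sum_add_index' h0 hadd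

theorem fs_decomp {m : (ℕ × ℕ) →₀ ℕ} {p : ℕ × ℕ} (hp : 1 ≤ m p) :
    m - Finsupp.single p 1 + Finsupp.single p 1 = m :=
  tsub_add_cancel_of_le (Finsupp.single_le_iff.2 hp)

theorem fs_sum_decomp {m : (ℕ × ℕ) →₀ ℕ} {p : ℕ × ℕ} (hp : 1 ≤ m p)
    (w : ℕ × ℕ → ℕ → ℕ) (h0 : ∀ p, w p 0 = 0)
    (hadd : ∀ p a b, w p (a + b) = w p a + w p b) :
    m.sum w = (m - Finsupp.single p 1).sum w + w p 1 := by
  conv_lhs => rw [← fs_decomp hp]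
  rw [fs_sum_add _ _ w h0 hadd, Finsupp.sum_single_index (h0 p)]

theorem add_shuffle (a s b c : (ℕ × ℕ) →₀ ℕ) : a + s + b + c = a + b + c + s := by
  ext q
  simp only [Finsupp.add_apply]
  omega

theorem op_apply_zero {m' : (ℕ × ℕ) →₀ ℕ} {a b q : ℕ × ℕ} (hm'q : m' q = 0)
    (ha : a ≠ q) (hb : b ≠ q) :
    ((m' + Finsupp.single a 1 + Finsupp.single b 1) : (ℕ × ℕ) →₀ ℕ) q = 0 := by
  rw [Finsupp.add_apply, Finsupp.add_apply, Finsupp.single_eq_of_ne' ha,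
    Finsupp.single_eq_of_ne' hb, hm'q]
  rfl

theorem sub_apply_zero {m : (ℕ × ℕ) →₀ ℕ} {p q : ℕ × ℕ} (h : m q = 0) :
    ((m - Finsupp.single p 1) : (ℕ × ℕ) →₀ ℕ) q = 0 := by
  rw [Finsupp.tsub_apply, h]
  omega

theorem plusOp_eq {m : (ℕ × ℕ) →₀ ℕ} {l r : ℕ} (hp : 1 ≤ m (l, r)) :
    plusOp m l r = (m - Finsupp.single (l, r) 1) + Finsupp.single (0, 1) 1
      + Finsupp.single (l + 1, r) 1 := by
  rw [plusOp]
  conv_lhs => rw [← fs_decomp hp]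
  rw [add_shuffle]
  exact add_tsub_cancel_right _ _

theorem tOp_eq {m : (ℕ × ℕ) →₀ ℕ} {l r : ℕ} (hp : 1 ≤ m (l, r)) :
    tOp m l r = (m - Finsupp.single (l, r) 1) + Finsupp.single (2, 0) 1
      + Finsupp.single (l - 1, r + 1) 1 := by
  rw [tOp]
  conv_lhs => rw [← fs_decomp hp]
  rw [add_shuffle]
  exact add_tsub_cancel_right _ _

theorem plus_mem {n : ℕ} {m : (ℕ × ℕ) →₀ ℕ} (hm : AtildeMem n m)
    {l r : ℕ} (hlr : 2 ≤ l + r) (hp : 1 ≤ m (l, r)) :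
    AtildeMem (n + 1) (plusOp m l r) := by
  obtain ⟨h00, h10, hc, hl, hr⟩ := hm
  have e1 := fs_sum_decomp hp (fun _ k => k) (fun _ => rfl) (fun _ _ _ => rfl)
  have e2 := fs_sum_decomp hp (fun p k => p.1 * k) (by simp) (by intros; ring)
  have e3 := fs_sum_decomp hp (fun p k => p.2 * k) (by simp) (by intros; ring)
  have hne3 : ((l + 1, r) : ℕ × ℕ) ≠ (0, 0) := by simp [Prod.ext_iff]
  have hne4 : ((l + 1, r) : ℕ × ℕ) ≠ (1, 0) := by simp [Prod.ext_iff]; omega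
  beta_reduce at e1 e2 e3
  refine ⟨?_, ?_, ?_, ?_, ?_⟩
  · rw [plusOp_eq hp]
    exact op_apply_zero (sub_apply_zero h00) (show ((0,1):ℕ×ℕ) ≠ (0,0) by decide) hne3
  · rw [plusOp_eq hp]
    exact op_apply_zero (sub_apply_zero h10) (show ((0,1):ℕ×ℕ) ≠ (1,0) by decide) hne4
  · rw [plusOp_eq hp, fs_sum_add _ _ _ (fun _ => rfl) (fun _ _ _ => rfl),
      fs_sum_add _ _ _ (fun _ => rfl) (fun _ _ _ => rfl),
      Finsupp.sum_single_index rfl, Finsupp.sum_single_index rfl]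
    omega
  · rw [plusOp_eq hp, fs_sum_add _ _ (fun p k => p.1 * k) (by simp) (by intros; ring),
      fs_sum_add _ _ (fun p k => p.1 * k) (by simp) (by intros; ring),
      Finsupp.sum_single_index (by simp), Finsupp.sum_single_index (by simp)]
    simp only at e2 ⊢
    omega
  · rw [plusOp_eq hp, fs_sum_add _ _ (fun p k => p.2 * k) (by simp) (by intros; ring),
      fs_sum_add _ _ (fun p k => p.2 * k) (by simp) (by intros; ring),
      Finsupp.sum_single_index (by simp), Finsupp.sum_single_index (by simp)]
    simp only at e3 ⊢
    omega

theorem t_mem {n : ℕ} {m : (ℕ × ℕ) →₀ ℕ} (hm : AtildeMem n m)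
    {l r : ℕ} (hl1 : 1 ≤ l) (hp : 1 ≤ m (l, r)) :
    AtildeMem (n + 1) (tOp m l r) := by
  obtain ⟨h00, h10, hc, hl, hr⟩ := hm
  have e1 := fs_sum_decomp hp (fun _ k => k) (fun _ => rfl) (fun _ _ _ => rfl)
  have e2 := fs_sum_decomp hp (fun p k => p.1 * k) (by simp) (by intros; ring)
  have e3 := fs_sum_decomp hp (fun p k => p.2 * k) (by simp) (by intros; ring)
  have hne1 : ((2, 0) : ℕ × ℕ) ≠ (0, 0) := by decide
  have hne2 : ((2, 0) : ℕ × ℕ) ≠ (1, 0) := by decide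
  have hne3 : ((l - 1, r + 1) : ℕ × ℕ) ≠ (0, 0) := by simp [Prod.ext_iff]
  have hne4 : ((l - 1, r + 1) : ℕ × ℕ) ≠ (1, 0) := by simp [Prod.ext_iff]
  beta_reduce at e1 e2 e3
  refine ⟨?_, ?_, ?_, ?_, ?_⟩
  · rw [tOp_eq hp]
    exact op_apply_zero (sub_apply_zero h00) hne1 hne3
  · rw [tOp_eq hp]
    exact op_apply_zero (sub_apply_zero h10) hne2 hne4
  · rw [tOp_eq hp, fs_sum_add _ _ _ (fun _ => rfl) (fun _ _ _ => rfl),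
      fs_sum_add _ _ _ (fun _ => rfl) (fun _ _ _ => rfl),
      Finsupp.sum_single_index rfl, Finsupp.sum_single_index rfl]
    omega
  · rw [tOp_eq hp, fs_sum_add _ _ (fun p k => p.1 * k) (by simp) (by intros; ring),
      fs_sum_add _ _ (fun p k => p.1 * k) (by simp) (by intros; ring),
      Finsupp.sum_single_index (by simp), Finsupp.sum_single_index (by simp)]
    simp only at e2 ⊢
    omega
  · rw [tOp_eq hp, fs_sum_add _ _ (fun p k => p.2 * k) (by simp) (by intros; ring),
      fs_sum_add _ _ (fun p k => p.2 * k) (by simp) (by intros; ring),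
      Finsupp.sum_single_index (by simp), Finsupp.sum_single_index (by simp)]
    simp only at e3 ⊢
    omega

theorem m_mem {n : ℕ} {m : (ℕ × ℕ) →₀ ℕ} (hm : AtildeMem n m) :
    AtildeMem (n + 1) (mOp m) := by
  obtain ⟨h00, h10, hc, hl, hr⟩ := hm
  have hne1 : ((1, 1) : ℕ × ℕ) ≠ (0, 0) := by decide
  have hne2 : ((1, 1) : ℕ × ℕ) ≠ (1, 0) := by decide
  refine ⟨?_, ?_, ?_, ?_, ?_⟩
  · rw [mOp, Finsupp.add_apply, Finsupp.single_eq_of_ne' hne1, h00]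
    rfl
  · rw [mOp, Finsupp.add_apply, Finsupp.single_eq_of_ne' hne2, h10]
    rfl
  · rw [mOp, fs_sum_add _ _ _ (fun _ => rfl) (fun _ _ _ => rfl),
      Finsupp.sum_single_index rfl]
    omega
  · rw [mOp, fs_sum_add _ _ (fun p k => p.1 * k) (by simp) (by intros; ring),
      Finsupp.sum_single_index (by simp)]
    omega
  · rw [mOp, fs_sum_add _ _ (fun p k => p.2 * k) (by simp) (by intros; ring),
      Finsupp.sum_single_index (by simp)]
    omega

end Finsupp_helpers
theorem Pprod_add (f : ℝ → ℝ → ℝ) (y : ℝ → ℝ) (m₁ m₂ : (ℕ × ℕ) →₀ ℕ) (x : ℝ) :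
    Pprod f y (m₁ + m₂) x = Pprod f y m₁ x * Pprod f y m₂ x :=
  Finsupp.prod_add_index' (fun _ => pow_zero _) (fun _ _ _ => pow_add _ _ _)

theorem Pprod_single (f : ℝ → ℝ → ℝ) (y : ℝ → ℝ) (p : ℕ × ℕ) (k : ℕ) (x : ℝ) :
    Pprod f y (Finsupp.single p k) x = (Delta f p.1 (pd f 0 p.2) x (y x)) ^ k :=
  Finsupp.prod_single_index (pow_zero _)

theorem Pprod_factor {f : ℝ → ℝ → ℝ} {y : ℝ → ℝ} {m : (ℕ × ℕ) →₀ ℕ} {p : ℕ × ℕ}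
    (hp : 1 ≤ m p) (x : ℝ) :
    Pprod f y m x = Pprod f y (m - Finsupp.single p 1) x * Delta f p.1 (pd f 0 p.2) x (y x) := by
  conv_lhs => rw [← fs_decomp hp]
  rw [Pprod_add, Pprod_single, pow_one]

theorem Pprod_erase {f : ℝ → ℝ → ℝ} {y : ℝ → ℝ} {m : (ℕ × ℕ) →₀ ℕ} {p : ℕ × ℕ}
    (hp : p ∈ m.support) (x : ℝ) :
    Pprod f y (m - Finsupp.single p 1) x
      = (∏ q ∈ m.support.erase p, (Delta f q.1 (pd f 0 q.2) x (y x)) ^ (m q))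
        * (Delta f p.1 (pd f 0 p.2) x (y x)) ^ (m p - 1) := by
  rw [Pprod, Finsupp.prod_of_support_subset _ Finsupp.support_tsub _ (fun q _ => pow_zero _),
    ← Finset.mul_prod_erase _ _ hp]
  have h1 : ((m - Finsupp.single p 1) : (ℕ × ℕ) →₀ ℕ) p = m p - 1 := by
    rw [Finsupp.tsub_apply, Finsupp.single_eq_same]
  have h2 : ∀ q ∈ m.support.erase p,
      (Delta f q.1 (pd f 0 q.2) x (y x)) ^ (((m - Finsupp.single p 1) : (ℕ × ℕ) →₀ ℕ) q)
        = (Delta f q.1 (pd f 0 q.2) x (y x)) ^ (m q) := by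
    intro q hq
    have hne : p ≠ q := fun h => (Finset.mem_erase.1 hq).1 h.symm
    rw [Finsupp.tsub_apply, Finsupp.single_eq_of_ne' hne, Nat.sub_zero]
  rw [h1, Finset.prod_congr rfl h2, mul_comm]

theorem plusOp_zero_one {m : (ℕ × ℕ) →₀ ℕ} (hp : 1 ≤ m (0, 1)) : plusOp m 0 1 = mOp m := by
  rw [plusOp_eq hp, mOp, fs_decomp hp]

theorem tOp_two_zero {m : (ℕ × ℕ) →₀ ℕ} (hp : 1 ≤ m (2, 0)) : tOp m 2 0 = mOp m := by
  rw [tOp_eq hp, mOp]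
  rw [show (((2:ℕ) - 1, (0:ℕ) + 1) : ℕ × ℕ) = ((1:ℕ), (1:ℕ)) from rfl, fs_decomp hp]

theorem pairs_le_one (b : ℕ × ℕ) (h : ¬ 2 ≤ b.1 + b.2) :
    b = (0, 0) ∨ b = (1, 0) ∨ b = (0, 1) := by
  obtain ⟨b1, b2⟩ := b
  simp only [Prod.mk.injEq]
  omega
theorem Pprod_mOp (f : ℝ → ℝ → ℝ) (y : ℝ → ℝ) (m : (ℕ × ℕ) →₀ ℕ) (x : ℝ) :
    Pprod f y (mOp m) x = Pprod f y m x * Delta f 1 (pd f 0 1) x (y x) := by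
  rw [mOp, Pprod_add, Pprod_single, pow_one]

theorem statement9 (f : ℝ → ℝ → ℝ) (x₀ y₀ : ℝ) (y : ℝ → ℝ)
    (hf : ∀ᶠ p in 𝓝 (x₀, y₀), ContDiffAt ℝ (⊤ : ℕ∞) (Function.uncurry f) p)
    (hf0 : f x₀ y₀ = 0) (hfy : pd f 0 1 x₀ y₀ ≠ 0)
    (hy : ∀ᶠ x in 𝓝 x₀, ContDiffAt ℝ (⊤ : ℕ∞) y x)
    (hy0 : y x₀ = y₀)
    (himp : ∀ᶠ x in 𝓝 x₀, f x (y x) = 0)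
    (n : ℕ) (hn : 2 ≤ n) (m : (ℕ × ℕ) →₀ ℕ) (hm : AtildeMem n m) :
    (∀ l r : ℕ, 2 ≤ l + r → 1 ≤ m (l, r) → AtildeMem (n + 1) (plusOp m l r)) ∧
    (∀ l r : ℕ, 2 ≤ l + r → 1 ≤ l → (l, r) ≠ (2, 0) → 1 ≤ m (l, r) →
      AtildeMem (n + 1) (tOp m l r)) ∧
    AtildeMem (n + 1) (mOp m) ∧
    (∀ᶠ x in 𝓝 x₀,
      (pd f 0 1 x (y x)) ^ 2 * deriv (fun x' => Pprod f y m x') x -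
        (2 * (n : ℝ) - 1) * Delta f 1 (pd f 0 1) x (y x) * Pprod f y m x =
      (∑ p ∈ m.support.filter fun p : ℕ × ℕ => 2 ≤ p.1 + p.2,
          (m p : ℝ) * Pprod f y (plusOp m p.1 p.2) x) -
      (∑ p ∈ m.support.filter fun p : ℕ × ℕ => 1 ≤ p.1 ∧ p ≠ (2, 0),
          (p.1 : ℝ) * (m p : ℝ) * Pprod f y (tOp m p.1 p.2) x) -
      ((n : ℝ) - 1 - (m (0, 1) : ℝ) + 2 * (m (2, 0) : ℝ)) * Pprod f y (mOp m) x) := by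
  have hfN : Nice (x₀, y₀) f := hf
  obtain ⟨h00, h10, hc, hlw, hrw⟩ := hm
  refine ⟨fun l r hlr hp => plus_mem ⟨h00, h10, hc, hlw, hrw⟩ hlr hp,
    fun l r _ hl1 _ hp => t_mem ⟨h00, h10, hc, hlw, hrw⟩ hl1 hp,
    m_mem ⟨h00, h10, hc, hlw, hrw⟩, ?_⟩
  have hstar : ∀ᶠ x in 𝓝 x₀, ∀ p ∈ m.support,
      DifferentiableAt ℝ (fun x' => Delta f p.1 (pd f 0 p.2) x' (y x')) x ∧
      pd f 0 1 x (y x) ^ 2 * deriv (fun x' => Delta f p.1 (pd f 0 p.2) x' (y x')) x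
        = pd f 0 1 x (y x) * Delta f (p.1+1) (pd f 0 p.2) x (y x)
          - (p.1 : ℝ) * Delta f 2 f x (y x) * Delta f (p.1-1) (pd (pd f 0 p.2) 0 1) x (y x)
          + (p.1 : ℝ) * Delta f 1 (pd f 0 1) x (y x) * Delta f p.1 (pd f 0 p.2) x (y x) :=
    (Filter.eventually_all_finset _).2
      (fun p _ => star_analytic hfN hy hy0 himp (hfN.pdAll 0 p.2) p.1)
  filter_upwards [hstar] with x hx
  have hPder : deriv (fun x' => Pprod f y m x') x = ∑ p ∈ m.support,
      (∏ q ∈ m.support.erase p, (Delta f q.1 (pd f 0 q.2) x (y x)) ^ (m q)) •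
        ((m p : ℝ) * (Delta f p.1 (pd f 0 p.2) x (y x)) ^ (m p - 1)
          * deriv (fun x' => Delta f p.1 (pd f 0 p.2) x' (y x')) x) :=
    (HasDerivAt.fun_finsetProd (fun p hp => ((hx p hp).1).hasDerivAt.pow (m p))).deriv
  have key : pd f 0 1 x (y x) ^ 2 * deriv (fun x' => Pprod f y m x') x
      = ∑ p ∈ m.support, ((m p : ℝ) * Pprod f y (plusOp m p.1 p.2) x
          - (p.1 : ℝ) * (m p : ℝ) * Pprod f y (tOp m p.1 p.2) x
          + (p.1 : ℝ) * (m p : ℝ) * Pprod f y (mOp m) x) := by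
    rw [hPder, Finset.mul_sum]
    refine Finset.sum_congr rfl fun p hp => ?_
    have hp1 : 1 ≤ m p := Nat.one_le_iff_ne_zero.2 (Finsupp.mem_support_iff.1 hp)
    have hs := (hx p hp).2
    rw [pd_zero_succ'] at hs
    obtain ⟨l, r⟩ := p
    dsimp only at hs hp1 ⊢
    have hplus : Pprod f y (plusOp m l r) x
        = Pprod f y (m - Finsupp.single (l, r) 1) x * pd f 0 1 x (y x)
          * Delta f (l+1) (pd f 0 r) x (y x) := by
      rw [plusOp_eq hp1, Pprod_add, Pprod_add, Pprod_single, Pprod_single, pow_one, pow_one]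
      dsimp only
      rw [Delta_zero']
    have htop : Pprod f y (tOp m l r) x
        = Pprod f y (m - Finsupp.single (l, r) 1) x * Delta f 2 f x (y x)
          * Delta f (l-1) (pd f 0 (r+1)) x (y x) := by
      rw [tOp_eq hp1, Pprod_add, Pprod_add, Pprod_single, Pprod_single, pow_one, pow_one]
      dsimp only
      rw [pd_zero_zero]
    have hmfac : Pprod f y m x
        = Pprod f y (m - Finsupp.single (l, r) 1) x * Delta f l (pd f 0 r) x (y x) :=
      Pprod_factor hp1 x
    have hPe := Pprod_erase (f := f) (y := y) hp x
    dsimp only at hPe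
    rw [smul_eq_mul, hplus, htop, Pprod_mOp, hmfac, hPe]
    linear_combination ((m (l, r) : ℝ)
      * (∏ q ∈ m.support.erase (l, r), (Delta f q.1 (pd f 0 q.2) x (y x)) ^ (m q))
      * (Delta f l (pd f 0 r) x (y x)) ^ (m (l, r) - 1)) * hs
  -- split the sum
  have esplit : ∑ p ∈ m.support, ((m p : ℝ) * Pprod f y (plusOp m p.1 p.2) x
          - (p.1 : ℝ) * (m p : ℝ) * Pprod f y (tOp m p.1 p.2) x
          + (p.1 : ℝ) * (m p : ℝ) * Pprod f y (mOp m) x)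
      = (∑ p ∈ m.support, (m p : ℝ) * Pprod f y (plusOp m p.1 p.2) x)
        - (∑ p ∈ m.support, (p.1 : ℝ) * (m p : ℝ) * Pprod f y (tOp m p.1 p.2) x)
        + (∑ p ∈ m.support, (p.1 : ℝ) * (m p : ℝ)) * Pprod f y (mOp m) x := by
    rw [Finset.sum_add_distrib, Finset.sum_sub_distrib, Finset.sum_mul]
  have hn' : ∑ p ∈ m.support, (p.1 : ℝ) * (m p : ℝ) = (n : ℝ) := by
    have h1 : ∑ p ∈ m.support, p.1 * m p = n := hlw
    calc ∑ p ∈ m.support, (p.1 : ℝ) * (m p : ℝ)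
        = ((∑ p ∈ m.support, p.1 * m p : ℕ) : ℝ) := by push_cast; rfl
      _ = (n : ℝ) := by rw [h1]
  have eplus : ∑ p ∈ m.support, (m p : ℝ) * Pprod f y (plusOp m p.1 p.2) x
      = (∑ p ∈ m.support.filter fun p : ℕ × ℕ => 2 ≤ p.1 + p.2,
          (m p : ℝ) * Pprod f y (plusOp m p.1 p.2) x)
        + (m (0, 1) : ℝ) * Pprod f y (mOp m) x := by
    rw [← Finset.sum_filter_add_sum_filter_not m.support (fun p : ℕ × ℕ => 2 ≤ p.1 + p.2)
      (fun p => (m p : ℝ) * Pprod f y (plusOp m p.1 p.2) x)]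
    congr 1
    have hmem : ∀ b ∈ m.support.filter (fun p : ℕ × ℕ => ¬ 2 ≤ p.1 + p.2), b = (0, 1) := by
      intro b hb
      obtain ⟨hbs, hbc⟩ := Finset.mem_filter.1 hb
      have hbne := Finsupp.mem_support_iff.1 hbs
      rcases pairs_le_one b hbc with h | h | h
      · exact absurd (h ▸ h00) hbne
      · exact absurd (h ▸ h10) hbne
      · exact h
    rcases Nat.eq_zero_or_pos (m (0, 1)) with h01 | h01
    · rw [Finset.sum_eq_zero, h01]
      · simp
      · intro b hb
        have hb' := hmem b hb
        subst hb'
        exact absurd h01 (Finsupp.mem_support_iff.1 (Finset.mem_filter.1 hb).1)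
    · rw [Finset.sum_eq_single (0, 1)]
      · dsimp only
        rw [plusOp_zero_one h01]
      · intro b hb hbne
        exact absurd (hmem b hb) hbne
      · intro habs
        exact absurd (Finset.mem_filter.2 ⟨Finsupp.mem_support_iff.2 (by omega), by norm_num⟩) habs
  have et : ∑ p ∈ m.support, (p.1 : ℝ) * (m p : ℝ) * Pprod f y (tOp m p.1 p.2) x
      = (∑ p ∈ m.support.filter fun p : ℕ × ℕ => 1 ≤ p.1 ∧ p ≠ (2, 0),
          (p.1 : ℝ) * (m p : ℝ) * Pprod f y (tOp m p.1 p.2) x)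
        + 2 * (m (2, 0) : ℝ) * Pprod f y (mOp m) x := by
    rw [← Finset.sum_filter_add_sum_filter_not m.support
      (fun p : ℕ × ℕ => 1 ≤ p.1 ∧ p ≠ (2, 0))
      (fun p => (p.1 : ℝ) * (m p : ℝ) * Pprod f y (tOp m p.1 p.2) x)]
    congr 1
    have hz : ∀ b ∈ m.support.filter (fun p : ℕ × ℕ => ¬ (1 ≤ p.1 ∧ p ≠ (2, 0))),
        b ≠ (2, 0) → (b.1 : ℝ) * (m b : ℝ) * Pprod f y (tOp m b.1 b.2) x = 0 := by
      intro b hb hbne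
      obtain ⟨hbs, hbc⟩ := Finset.mem_filter.1 hb
      have hb1 : b.1 = 0 := by
        by_contra hcon
        exact hbc ⟨by omega, hbne⟩
      rw [hb1]
      norm_num
    rcases Nat.eq_zero_or_pos (m (2, 0)) with h20 | h20
    · rw [Finset.sum_eq_zero, h20]
      · simp
      · intro b hb
        rcases eq_or_ne b (2, 0) with hbe | hbe
        · subst hbe
          exact absurd h20 (by simpa using Finsupp.mem_support_iff.1 (Finset.mem_filter.1 hb).1)
        · exact hz b hb hbe
    · rw [Finset.sum_eq_single (2, 0)]
      · dsimp only
        rw [tOp_two_zero h20]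
        norm_num
      · exact hz
      · intro habs
        exact absurd (Finset.mem_filter.2 ⟨Finsupp.mem_support_iff.2 (by omega), by norm_num⟩) habs
  have hPmOp' : Delta f 1 (pd f 0 1) x (y x) * Pprod f y m x = Pprod f y (mOp m) x := by
    rw [Pprod_mOp]; ring
  rw [key, esplit, hn', eplus, et]
  linear_combination (-(2 * (n : ℝ) - 1)) * hPmOp'
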